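/- arXiv:2007.09403 — 5 statements merged into one kernel-verified Lean document; each statement's English description precedes it below -/
import Mathlib

section
/- Let s be a natural number and let (A, +, ∘) be a left brace such that A^s = 0, where A^1 = A and A^{i+1} is the additive subgroup generated by all elements a*b with a ∈ A and b ∈ A^i. Let a, b, c ∈ A, and define inductively d_0 = a, d_0' = b, and d_{i+1} = d_i + d_i', d_{i+1}' = d_i * d_i' for all i ≥ 0. Then (a+b)*c = a*c + b*c + Σ_{i=0}^{2s} (−1)^{i+1} ( (d_i * d_i') * c − d_i * (d_i' * c) ). -/
/-!
Write `δ(x, y) = (x + y) * c - x * c - y * c`. Since `x + y + x * y = x ∘ y` and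
`(x ∘ y) * c = x * (y * c) + x * c + y * c`, one step `(x, y) ↦ (x + y, x * y)` gives
`δ(x + y, x * y) = -((x * y) * c - x * (y * c)) - δ(x, y)`, so `δ(a, b)` telescopes along
`(d_i, d_i')` into the alternating sum plus `±δ(d_{2s+1}, d_{2s+1}')`. Because `d_i' ∈ A^{i+1}`,
the sequence `d_i'` vanishes from `i = s` on, and `δ(x, 0) = 0` kills the remainder.
-/

/-- A left brace: an abelian group `(A, +)` together with a group operation `∘`
satisfying `a ∘ (b + c) + a = a ∘ b + a ∘ c`. -/
structure LeftBrace (A : Type*) [AddCommGroup A] where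
  circ : A → A → A
  one : A
  inv : A → A
  circ_assoc : ∀ a b c : A, circ (circ a b) c = circ a (circ b c)
  one_circ : ∀ a : A, circ one a = a
  circ_one : ∀ a : A, circ a one = a
  inv_circ : ∀ a : A, circ (inv a) a = one
  left_dist : ∀ a b c : A, circ a (b + c) + a = circ a b + circ a c

/-- `a * b = a ∘ b - a - b`. -/
def LeftBrace.star {A : Type*} [AddCommGroup A] (B : LeftBrace A) (a b : A) : A :=
  B.circ a b - a - b

/-- The left radical chain: `leftChain B i` is `A^i` for `i ≥ 1` (with the
convention `leftChain B 0 = ⊤`); `A^1 = A` and `A^{i+1}` is the additive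
subgroup generated by all `a * b` with `a ∈ A`, `b ∈ A^i`. -/
def LeftBrace.leftChain {A : Type*} [AddCommGroup A] (B : LeftBrace A) : ℕ → AddSubgroup A
  | 0 => ⊤
  | 1 => ⊤
  | (n+2) => AddSubgroup.closure {x : A | ∃ a : A, ∃ b ∈ LeftBrace.leftChain B (n+1), x = B.star a b}

lemma eq_sum_alternating_add_of_succ_eq_neg_sub {G : Type*} [AddCommGroup G] {δ t : ℕ → G}
    (h : ∀ n, δ (n + 1) = -t n - δ n) (n : ℕ) :
    δ 0 = ∑ i ∈ Finset.range n, (-1 : ℤ) ^ (i + 1) • t i + (-1 : ℤ) ^ n • δ n := by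
  -- telescope `(-1) ^ i • δ i`
  have hinc : ∀ i, (-1 : ℤ) ^ (i + 1) • δ (i + 1) - (-1 : ℤ) ^ i • δ i
      = -((-1 : ℤ) ^ (i + 1) • t i) := by
    intro i
    rw [h, pow_succ, mul_neg_one, neg_smul, neg_smul, smul_sub, smul_neg]
    abel
  have hsum := Finset.sum_range_sub (fun i => (-1 : ℤ) ^ i • δ i) n
  simp only [hinc, Finset.sum_neg_distrib, pow_zero, one_smul] at hsum
  rw [eq_sub_iff_add_eq, neg_add_eq_iff_eq_add] at hsum
  exact hsum

namespace LeftBrace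

variable {A : Type*} [AddCommGroup A] (B : LeftBrace A)

lemma circ_zero (a : A) : B.circ a 0 = a := by
  have h := B.left_dist a 0 0
  rw [add_zero] at h
  exact (add_left_cancel h).symm

lemma one_eq_zero : B.one = 0 :=
  (B.circ_zero B.one).symm.trans (B.one_circ 0)

lemma zero_circ (c : A) : B.circ 0 c = c := by
  rw [← B.one_eq_zero]
  exact B.one_circ c

lemma star_zero (a : A) : B.star a 0 = 0 := by
  simp [star, circ_zero]

lemma zero_star (c : A) : B.star 0 c = 0 := by
  simp [star, zero_circ]

lemma add_add_star (x y : A) : x + y + B.star x y = B.circ x y := by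
  simp only [star]
  abel

lemma circ_sub (x u v : A) : B.circ x (u - v) = B.circ x u - B.circ x v + x := by
  have h := B.left_dist x (u - v) v
  rw [sub_add_cancel] at h
  rw [eq_sub_of_add_eq h.symm]
  abel

lemma star_circ (x y c : A) :
    B.star (B.circ x y) c = B.star x (B.star y c) + B.star x c + B.star y c := by
  simp only [star]
  rw [B.circ_assoc, B.circ_sub, B.circ_sub]
  abel

def addStarDefect (x y c : A) : A :=
  B.star (x + y) c - B.star x c - B.star y c

def starAssociator (x y c : A) : A :=
  B.star (B.star x y) c - B.star x (B.star y c)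

lemma addStarDefect_zero_right (x c : A) : B.addStarDefect x 0 c = 0 := by
  simp [addStarDefect, zero_star]

lemma addStarDefect_add_star (x y c : A) :
    B.addStarDefect (x + y) (B.star x y) c = -B.starAssociator x y c - B.addStarDefect x y c := by
  simp only [addStarDefect, starAssociator]
  rw [add_add_star, star_circ]
  abel

lemma star_mem_leftChain_succ_succ (a : A) {b : A} {n : ℕ} (hb : b ∈ B.leftChain (n + 1)) :
    B.star a b ∈ B.leftChain (n + 2) :=
  AddSubgroup.subset_closure ⟨a, b, hb, rfl⟩

section Sequence

variable {B} {d d' : ℕ → A} (hd' : ∀ i, d' (i + 1) = B.star (d i) (d' i))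
include hd'

lemma seq_mem_leftChain_succ (i : ℕ) : d' i ∈ B.leftChain (i + 1) := by
  induction i with
  | zero => exact AddSubgroup.mem_top _
  | succ i ih => exact hd' i ▸ B.star_mem_leftChain_succ_succ (d i) ih

lemma seq_eq_zero_of_le {k i : ℕ} (hk : d' k = 0) (hki : k ≤ i) : d' i = 0 := by
  induction i, hki using Nat.le_induction with
  | base => exact hk
  | succ i _ ih => rw [hd', ih, star_zero]

lemma seq_eq_zero_of_leftChain_eq_bot {s : ℕ} (hs : B.leftChain s = ⊥) {i : ℕ}
    (hsi : s ≤ i) : d' i = 0 := by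
  refine seq_eq_zero_of_le hd' ?_ hsi
  rcases s with _ | k
  · have h0 : d' 0 ∈ B.leftChain 0 := AddSubgroup.mem_top _
    rwa [hs, AddSubgroup.mem_bot] at h0
  · have hk := seq_mem_leftChain_succ hd' k
    rw [hs, AddSubgroup.mem_bot] at hk
    rw [hd', hk, star_zero]

lemma addStarDefect_eq_sum_add (hd : ∀ i, d (i + 1) = d i + d' i) (c : A) (n : ℕ) :
    B.addStarDefect (d 0) (d' 0) c
      = ∑ i ∈ Finset.range n, (-1 : ℤ) ^ (i + 1) • B.starAssociator (d i) (d' i) c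
        + (-1 : ℤ) ^ n • B.addStarDefect (d n) (d' n) c :=
  eq_sum_alternating_add_of_succ_eq_neg_sub (δ := fun i => B.addStarDefect (d i) (d' i) c)
    (t := fun i => B.starAssociator (d i) (d' i) c)
    (fun i => by rw [hd, hd', addStarDefect_add_star]) n

end Sequence

end LeftBrace

theorem statement0 {A : Type*} [AddCommGroup A] (B : LeftBrace A) (s : ℕ)
    (hs : B.leftChain s = ⊥) (a b c : A)
    (d d' : ℕ → A)
    (hd0 : d 0 = a) (hd0' : d' 0 = b)
    (hd : ∀ i, d (i + 1) = d i + d' i)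
    (hd' : ∀ i, d' (i + 1) = B.star (d i) (d' i)) :
    B.star (a + b) c = B.star a c + B.star b c +
      ∑ i ∈ Finset.range (2 * s + 1),
        (-1 : ℤ) ^ (i + 1) •
          (B.star (B.star (d i) (d' i)) c - B.star (d i) (B.star (d' i) c)) := by
  have hvanish : d' (2 * s + 1) = 0 :=
    LeftBrace.seq_eq_zero_of_leftChain_eq_bot hd' hs (by omega)
  have htelescope := B.addStarDefect_eq_sum_add hd' hd c (2 * s + 1)
  rw [hvanish, B.addStarDefect_zero_right, smul_zero, add_zero, hd0, hd0'] at htelescope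
  simp only [LeftBrace.addStarDefect, LeftBrace.starAssociator] at htelescope
  rw [← htelescope]
  abel
end

section
/- Let (A, +, ·) be a nilpotent pre-Lie algebra over a field F of characteristic zero. For a ∈ A let L_a: A → A be left multiplication L_a(b) = a·b, and define W: A → A by W(a) = Σ_{k≥1} (1/k!) · L_a^{k−1}(a) = a + (1/2!)·a·a + (1/3!)·a·(a·a) + ⋯ (a finite sum by nilpotency). Then W is a bijection from A to A. -/
open Filter Topology

/-- A pre-Lie algebra over a field `F`: an `F`-vector space with a bilinear
product satisfying `(x·y)·z − x·(y·z) = (y·x)·z − y·(x·z)`. -/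
structure PreLieAlg (F : Type*) (A : Type*) [Field F] [AddCommGroup A] [Module F A] where
  mul : A → A → A
  mul_add : ∀ a b c : A, mul a (b + c) = mul a b + mul a c
  add_mul : ∀ a b c : A, mul (a + b) c = mul a c + mul b c
  smul_mul : ∀ (e : F) (a b : A), mul (e • a) b = e • mul a b
  mul_smul : ∀ (e : F) (a b : A), mul a (e • b) = e • mul a b
  pre_lie : ∀ a b c : A,
    mul (mul a b) c - mul a (mul b c) = mul (mul b a) c - mul b (mul a c)

/-- `P.IsProd x n` : `x` is a product of `n` elements of `A`, with any
distribution of brackets. -/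
inductive PreLieAlg.IsProd {F A : Type*} [Field F] [AddCommGroup A] [Module F A]
    (P : PreLieAlg F A) : A → ℕ → Prop
  | single (a : A) : PreLieAlg.IsProd P a 1
  | node {u v : A} {n m : ℕ} : PreLieAlg.IsProd P u n → PreLieAlg.IsProd P v m →
      PreLieAlg.IsProd P (P.mul u v) (n + m)

/-- `A` is nilpotent of index `n` (`0 < n`): every product of `n` elements
(with any distribution of brackets) is zero. -/
def PreLieAlg.IsNilpotentOf {F A : Type*} [Field F] [AddCommGroup A] [Module F A]
    (P : PreLieAlg F A) (n : ℕ) : Prop :=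
  0 < n ∧ ∀ x : A, P.IsProd x n → x = 0

/-- `e^{L_x}(b) = Σ_{k ≥ 0} (1/k!) • L_x^k(b)`; under nilpotency of index `n`
all terms with `k ≥ n - 1` vanish, so the series equals this truncated sum. -/
def PreLieAlg.expL {F A : Type*} [Field F] [AddCommGroup A] [Module F A]
    (P : PreLieAlg F A) (n : ℕ) (x b : A) : A :=
  ∑ k ∈ Finset.range n, ((Nat.factorial k : F))⁻¹ • (P.mul x)^[k] b

/-- `W(a) = Σ_{k ≥ 1} (1/k!) • L_a^{k-1}(a)`; under nilpotency of index `n`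
all terms with `k ≥ n` vanish, so the series equals this truncated sum. -/
def PreLieAlg.W {F A : Type*} [Field F] [AddCommGroup A] [Module F A]
    (P : PreLieAlg F A) (n : ℕ) (a : A) : A :=
  ∑ k ∈ Finset.range n, ((Nat.factorial (k + 1) : F))⁻¹ • (P.mul a)^[k] a

/-- The group-of-flows multiplication `a ∘ b = a + e^{L_{Ω(a)}}(b)`. -/
def PreLieAlg.flow {F A : Type*} [Field F] [AddCommGroup A] [Module F A]
    (P : PreLieAlg F A) (n : ℕ) (Ω : A → A) (a b : A) : A :=
  a + P.expL n (Ω a) b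

/-- `a * b = a ∘ b - a - b` for the group-of-flows multiplication. -/
def PreLieAlg.flowStar {F A : Type*} [Field F] [AddCommGroup A] [Module F A]
    (P : PreLieAlg F A) (n : ℕ) (Ω : A → A) (a b : A) : A :=
  P.flow n Ω a b - a - b

/-! Filter `A` by the spans `A_k` of products of at least `k` factors; nilpotency makes
`A_n = 0`. Every term of `W` beyond the first is a product of at least two factors, so
`x - y ∈ A_k` implies `W x - W y ≡ x - y` modulo `A_(k+1)`. Such a map is injective, and
the iteration `a ↦ a + b - W a` started at `b` moves one filtration step deeper each time,
so it becomes stationary at a preimage of `b`. -/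

open Function in
theorem bijective_of_sub_sub_mem_succ {G : Type*} [AddCommGroup G] (S : ℕ → AddSubgroup G)
    {N : ℕ} (h₀ : S 0 = ⊤) (hN : S N = ⊥) {f : G → G}
    (hf : ∀ k x y, x - y ∈ S k → f x - f y - (x - y) ∈ S (k + 1)) : Bijective f := by
  refine ⟨fun x y hxy => ?_, fun b => ?_⟩
  · have hmem : ∀ k, x - y ∈ S k := by
      intro k
      induction k with
      | zero => simp [h₀]
      | succ k ih => simpa [hxy] using neg_mem (hf k x y ih)
    simpa [hN, sub_eq_zero] using hmem N
  · set g : G → G := fun a => a + b - f a with hg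
    have hg_sub : ∀ u v, g u - g v = -(f u - f v - (u - v)) := fun u v => by
      simp only [hg]; abel
    have hmem : ∀ k, g^[k + 1] b - g^[k] b ∈ S k := by
      intro k
      induction k with
      | zero => simp [h₀]
      | succ k ih =>
        simp only [iterate_succ_apply'] at ih ⊢
        rw [hg_sub]
        exact neg_mem (hf k _ _ ih)
    have hfix : g (g^[N] b) - g^[N] b = 0 := by
      simpa only [hN, AddSubgroup.mem_bot, iterate_succ_apply'] using hmem N
    refine ⟨g^[N] b, ?_⟩
    simp only [hg] at hfix
    rw [← sub_eq_zero, ← neg_eq_zero, ← hfix]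
    abel

namespace PreLieAlg

variable {F A : Type*} [Field F] [AddCommGroup A] [Module F A] (P : PreLieAlg F A)

def mulBilin : A →ₗ[F] A →ₗ[F] A :=
  LinearMap.mk₂ F P.mul P.add_mul P.smul_mul P.mul_add P.mul_smul

lemma mul_sub_mul (x y b c : A) :
    P.mul x b - P.mul y c = P.mul (x - y) b + P.mul y (b - c) := by
  change P.mulBilin x b - P.mulBilin y c = P.mulBilin (x - y) b + P.mulBilin y (b - c)
  simp only [map_sub, LinearMap.sub_apply]
  abel

namespace IsProd

variable {P}

lemma one_le {x : A} {m : ℕ} (h : P.IsProd x m) : 1 ≤ m := by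
  induction h <;> omega

lemma of_le {x : A} {m : ℕ} (h : P.IsProd x m) {k : ℕ} (hk : 1 ≤ k) (hkm : k ≤ m) :
    P.IsProd x k := by
  induction h generalizing k with
  | single a => exact (show k = 1 by omega) ▸ .single a
  | @node u v m₁ m₂ hu hv ihu ihv =>
    rcases hk.eq_or_lt with rfl | hk
    · exact .single _
    · have := hu.one_le
      have := hv.one_le
      have hu' := ihu (k := min m₁ (k - 1)) (by omega) (by omega)
      have hv' := ihv (k := k - min m₁ (k - 1)) (by omega) (by omega)
      exact (show min m₁ (k - 1) + (k - min m₁ (k - 1)) = k by omega) ▸ hu'.node hv'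

end IsProd

def filtration (k : ℕ) : Submodule F A :=
  Submodule.span F {x | ∃ m, k ≤ m ∧ P.IsProd x m}

lemma mem_filtration_one (a : A) : a ∈ P.filtration 1 :=
  Submodule.subset_span ⟨1, le_rfl, .single a⟩

lemma filtration_one : P.filtration 1 = ⊤ :=
  eq_top_iff.2 fun a _ => P.mem_filtration_one a

lemma filtration_antitone : Antitone P.filtration :=
  fun _ _ h => Submodule.span_mono fun _ ⟨m, hm, hx⟩ => ⟨m, h.trans hm, hx⟩

lemma mul_mem_filtration {x y : A} {k l : ℕ} (hx : x ∈ P.filtration k)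
    (hy : y ∈ P.filtration l) : P.mul x y ∈ P.filtration (k + l) := by
  have hle : Submodule.map₂ P.mulBilin (P.filtration k) (P.filtration l) ≤
      P.filtration (k + l) := by
    rw [filtration, filtration, Submodule.map₂_span_span, Submodule.span_le]
    rintro _ ⟨x, ⟨m, hm, hx⟩, y, ⟨m', hm', hy⟩, rfl⟩
    exact Submodule.subset_span ⟨m + m', add_le_add hm hm', hx.node hy⟩
  exact hle (Submodule.apply_mem_map₂ P.mulBilin hx hy)

lemma filtration_eq_bot {n : ℕ} (hn : P.IsNilpotentOf n) : P.filtration n = ⊥ := by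
  rw [eq_bot_iff, filtration, Submodule.span_le]
  rintro x ⟨m, hm, hx⟩
  exact hn.2 x (hx.of_le hn.1 hm)

lemma iterate_mul_mem_filtration (x b : A) (j : ℕ) :
    (P.mul x)^[j] b ∈ P.filtration (j + 1) := by
  induction j with
  | zero => exact P.mem_filtration_one b
  | succ j ih =>
    rw [Function.iterate_succ_apply', add_comm (j + 1)]
    exact P.mul_mem_filtration (P.mem_filtration_one x) ih

lemma iterate_mul_sub_iterate_mul_mem_filtration {x y b c : A} {k : ℕ}
    (hxy : x - y ∈ P.filtration k) (hbc : b - c ∈ P.filtration k) (j : ℕ) :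
    (P.mul x)^[j] b - (P.mul y)^[j] c ∈ P.filtration (k + j) := by
  induction j with
  | zero => simpa using hbc
  | succ j ih =>
    rw [Function.iterate_succ_apply', Function.iterate_succ_apply', mul_sub_mul]
    refine add_mem (P.mul_mem_filtration hxy (P.iterate_mul_mem_filtration x b j)) ?_
    exact P.filtration_antitone (by omega) (P.mul_mem_filtration (P.mem_filtration_one y) ih)

lemma W_sub_W_sub_sub_mem_filtration {n : ℕ} (hn : 0 < n) {x y : A} {k : ℕ}
    (hxy : x - y ∈ P.filtration k) :
    P.W n x - P.W n y - (x - y) ∈ P.filtration (k + 1) := by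
  obtain ⟨m, rfl⟩ : ∃ m, n = m + 1 := ⟨n - 1, by omega⟩
  have hW : P.W (m + 1) x - P.W (m + 1) y - (x - y) =
      ∑ j ∈ Finset.range m, ((j + 2).factorial : F)⁻¹ •
        ((P.mul x)^[j + 1] x - (P.mul y)^[j + 1] y) := by
    simp only [W, Finset.sum_range_succ', Function.iterate_zero, id_eq, smul_sub,
      Finset.sum_sub_distrib, zero_add, Nat.factorial_one, Nat.cast_one, inv_one, one_smul]
    abel
  rw [hW]
  refine Submodule.sum_mem _ fun j _ => Submodule.smul_mem _ _ ?_
  exact P.filtration_antitone (by omega)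
    (P.iterate_mul_sub_iterate_mul_mem_filtration hxy hxy (j + 1))

end PreLieAlg

theorem statement6_general {F A : Type*} [Field F] [AddCommGroup A] [Module F A]
    (P : PreLieAlg F A) (n : ℕ) (hn : P.IsNilpotentOf n) :
    Function.Bijective (P.W n) := by
  refine bijective_of_sub_sub_mem_succ (fun k => (P.filtration (k + 1)).toAddSubgroup)
    (N := n - 1) ?_ ?_ fun k x y hxy => P.W_sub_W_sub_sub_mem_filtration hn.1 hxy
  · simp [P.filtration_one]
  · simp [Nat.sub_add_cancel hn.1, P.filtration_eq_bot hn]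

theorem statement6 {F A : Type*} [Field F] [CharZero F] [AddCommGroup A] [Module F A]
    (P : PreLieAlg F A) (n : ℕ) (hn : P.IsNilpotentOf n) :
    Function.Bijective (P.W n) :=
  statement6_general P n hn
end

section
/- Let (A, +, ·) be a nilpotent pre-Lie algebra over a field F of characteristic zero, let Ω: A → A be the inverse of the map W, define a∘b = a + e^{L_{Ω(a)}}(b) and a*b = a∘b − a − b. Then for all a, b ∈ A, the element a*b − a·b lies in the F-linear span of the set of all iterated ·-products (with any distribution of brackets) whose factors are copies of a and b, in which b appears exactly once and only as the last factor, and in which a appears at least two times. -/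
open Filter Topology

/-- `MulWord P a b w m t` says `w` is an iterated `·`-product whose leaves are
`m` copies of `a` and, if `t = true`, a single copy of `b` as the rightmost
(final) leaf. -/
inductive MulWord {F A : Type*} [Field F] [AddCommGroup A] [Module F A]
    (P : PreLieAlg F A) (a b : A) : A → ℕ → Bool → Prop
  | base_a : MulWord P a b a 1 false
  | base_b : MulWord P a b b 0 true
  | node {u v : A} {m₁ m₂ : ℕ} {t : Bool} :
      MulWord P a b u m₁ false → MulWord P a b v m₂ t →
      MulWord P a b (P.mul u v) (m₁ + m₂) t

/-!
Put `x = Ω a`, so `W(x) = a`, i.e. `x = a - Σ_{k ≥ 1} L_x^k x / (k+1)!`. Feeding this identity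
into itself shows that `x` lies in the span `S` of the bracketings of copies of `a` modulo products
of ever larger length, hence in `S` itself by nilpotency; and then `x - a` is a combination of
such bracketings with at least two copies of `a`. Finally
`a * b - a · b = Σ_{k ≥ 2} L_x^k b / k! + (x - a) · b`, where every `L_x^k b` with `k ≥ 2`
expands into words ending in `b` with at least `k` copies of `a`.
-/

namespace PreLieAlg

variable {F A : Type*} [Field F] [AddCommGroup A] [Module F A] (P : PreLieAlg F A)

def lmul : A →ₗ[F] A →ₗ[F] A :=
  LinearMap.mk₂ F P.mul P.add_mul P.smul_mul P.mul_add P.mul_smul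

@[simp] lemma lmul_apply (x y : A) : P.lmul x y = P.mul x y := rfl

def wordSpan (a b : A) (t : Bool) (j : ℕ) : Submodule F A :=
  Submodule.span F {w : A | ∃ m : ℕ, MulWord P a b w m t ∧ j ≤ m}

def prodSpan (j : ℕ) : Submodule F A :=
  Submodule.span F {x : A | ∃ k : ℕ, j ≤ k ∧ P.IsProd x k}

variable {P}

lemma wordSpan_antitone {a b : A} {t : Bool} : Antitone (P.wordSpan a b t) :=
  fun _ _ h => Submodule.span_mono fun _ ⟨m, hw, hm⟩ => ⟨m, hw, h.trans hm⟩

lemma prodSpan_antitone : Antitone P.prodSpan :=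
  fun _ _ h => Submodule.span_mono fun _ ⟨k, hk, hx⟩ => ⟨k, h.trans hk, hx⟩

lemma mem_prodSpan_one (x : A) : x ∈ P.prodSpan 1 :=
  Submodule.subset_span ⟨1, le_rfl, .single x⟩

lemma mul_mem_of_mem_span {s t : Set A} {U : Submodule F A}
    (h : ∀ u ∈ s, ∀ v ∈ t, P.mul u v ∈ U) {x y : A}
    (hx : x ∈ Submodule.span F s) (hy : y ∈ Submodule.span F t) : P.mul x y ∈ U := by
  have hxy := Submodule.apply_mem_map₂ P.lmul hx hy
  rw [Submodule.map₂_span_span] at hxy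
  refine Submodule.span_le.mpr ?_ hxy
  rintro _ ⟨u, hu, v, hv, rfl⟩
  exact h u hu v hv

lemma mul_mem_wordSpan {a b x y : A} {t : Bool} {i j : ℕ}
    (hx : x ∈ P.wordSpan a b false i) (hy : y ∈ P.wordSpan a b t j) :
    P.mul x y ∈ P.wordSpan a b t (i + j) :=
  mul_mem_of_mem_span (by
    rintro _ ⟨_, hu, hi⟩ _ ⟨_, hv, hj⟩
    exact Submodule.subset_span ⟨_, hu.node hv, Nat.add_le_add hi hj⟩) hx hy

lemma mul_mem_prodSpan {x y : A} {i j : ℕ} (hx : x ∈ P.prodSpan i) (hy : y ∈ P.prodSpan j) :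
    P.mul x y ∈ P.prodSpan (i + j) :=
  mul_mem_of_mem_span (by
    rintro _ ⟨_, hi, hu⟩ _ ⟨_, hj, hv⟩
    exact Submodule.subset_span ⟨_, Nat.add_le_add hi hj, hu.node hv⟩) hx hy

lemma iterate_mul_mem_wordSpan {a b x y : A} {t : Bool} {j : ℕ}
    (hx : x ∈ P.wordSpan a b false 1) (hy : y ∈ P.wordSpan a b t j) (k : ℕ) :
    (P.mul x)^[k] y ∈ P.wordSpan a b t (k + j) := by
  induction k with
  | zero => simpa using hy
  | succ k ih =>
    rw [Function.iterate_succ_apply', show k + 1 + j = 1 + (k + j) by omega]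
    exact mul_mem_wordSpan hx ih

lemma IsProd.one_le_s9 {x : A} {k : ℕ} (h : P.IsProd x k) : 1 ≤ k := by
  induction h with
  | single => exact le_rfl
  | node => omega

/-- A product of `k` factors is also one of `j ≤ k` factors: merge adjacent factors. -/
lemma IsProd.of_le_s9 {x : A} {k : ℕ} (h : P.IsProd x k) {j : ℕ} (hj : 1 ≤ j) (hjk : j ≤ k) :
    P.IsProd x j := by
  induction h generalizing j with
  | single c => exact (show j = 1 by omega) ▸ .single c
  | @node u v p q hu hv ihu ihv =>
    obtain rfl | hj := eq_or_lt_of_le hj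
    · exact .single _
    · have := hu.one_le_s9
      have := hv.one_le_s9
      have huv := IsProd.node (ihu (j := min p (j - 1)) (by omega) (by omega))
        (ihv (j := j - min p (j - 1)) (by omega) (by omega))
      rwa [show min p (j - 1) + (j - min p (j - 1)) = j by omega] at huv

lemma isProd_iterate_mul (x y : A) (k : ℕ) : P.IsProd ((P.mul x)^[k] y) (k + 1) := by
  induction k with
  | zero => exact .single y
  | succ k ih =>
    rw [Function.iterate_succ_apply', add_comm k]
    exact (IsProd.single x).node ih

lemma IsNilpotentOf.eq_zero_of_isProd {n : ℕ} (hn : P.IsNilpotentOf n) {x : A} {k : ℕ}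
    (hx : P.IsProd x k) (hk : n ≤ k) : x = 0 :=
  hn.2 x (hx.of_le_s9 hn.1 hk)

lemma IsNilpotentOf.prodSpan_eq_bot {n : ℕ} (hn : P.IsNilpotentOf n) : P.prodSpan n = ⊥ :=
  Submodule.span_eq_bot.mpr fun _ ⟨_, hk, hx⟩ => hn.eq_zero_of_isProd hx hk

lemma _root_.MulWord.isProd {a b w : A} {m : ℕ} {t : Bool} (h : MulWord P a b w m t) :
    P.IsProd w (m + t.toNat) := by
  induction h with
  | base_a => exact .single a
  | base_b => exact .single b
  | node _ _ ihu ihv => simpa [add_assoc] using ihu.node ihv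

lemma wordSpan_le_prodSpan (a b : A) (j : ℕ) : P.wordSpan a b false j ≤ P.prodSpan j :=
  Submodule.span_mono fun _ ⟨m, hw, hm⟩ => ⟨m, hm, by simpa using hw.isProd⟩

lemma IsNilpotentOf.expL_succ {n : ℕ} (hn : P.IsNilpotentOf n) (x b : A) :
    P.expL (n + 1) x b = P.expL n x b := by
  rw [expL, Finset.sum_range_succ,
    hn.eq_zero_of_isProd (isProd_iterate_mul x b n) n.le_succ, smul_zero, add_zero, expL]

lemma expL_sub_sub_mul_mem {U : Submodule F A} (m : ℕ) (x b : A)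
    (h : ∀ k, (P.mul x)^[k + 2] b ∈ U) : P.expL (m + 2) x b - b - P.mul x b ∈ U := by
  have hsum : P.expL (m + 2) x b - b - P.mul x b
      = ∑ k ∈ Finset.range m, ((k + 2).factorial : F)⁻¹ • (P.mul x)^[k + 2] b := by
    rw [expL, Finset.sum_range_succ', Finset.sum_range_succ']
    simp
  rw [hsum]
  exact Submodule.sum_mem _ fun k _ => Submodule.smul_mem _ _ (h k)

lemma W_sub_self_mem {U : Submodule F A} (m : ℕ) (x : A)
    (h : ∀ k, (P.mul x)^[k + 1] x ∈ U) : P.W (m + 1) x - x ∈ U := by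
  have hsum : P.W (m + 1) x - x
      = ∑ k ∈ Finset.range m, ((k + 2).factorial : F)⁻¹ • (P.mul x)^[k + 1] x := by
    rw [W, Finset.sum_range_succ']
    simp
  rw [hsum]
  exact Submodule.sum_mem _ fun k _ => Submodule.smul_mem _ _ (h k)

section Approximation

variable {a b : A} {j : ℕ}

lemma mul_mem_wordSpan_sup_prodSpan (hj : 1 ≤ j) {x y : A}
    (hx : x ∈ P.wordSpan a b false 1 ⊔ P.prodSpan j)
    (hy : y ∈ P.wordSpan a b false 1 ⊔ P.prodSpan j) :
    P.mul x y ∈ P.wordSpan a b false 1 ⊔ P.prodSpan (j + 1) := by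
  obtain ⟨u, hu, v, hv, rfl⟩ := Submodule.mem_sup.mp hx
  obtain ⟨s, hs, t, ht, rfl⟩ := Submodule.mem_sup.mp hy
  have hexpand : P.mul (u + v) (s + t)
      = P.mul u s + (P.mul u t + P.mul v s + P.mul v t) := by
    simp only [← lmul_apply, map_add, LinearMap.add_apply]
    abel
  have hu' := wordSpan_le_prodSpan a b 1 hu
  have hs' := wordSpan_le_prodSpan a b 1 hs
  rw [hexpand]
  refine Submodule.add_mem _ (Submodule.mem_sup_left ?_) (Submodule.mem_sup_right ?_)
  · exact wordSpan_antitone (by omega) (mul_mem_wordSpan hu hs)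
  · refine Submodule.add_mem _ (Submodule.add_mem _ ?_ ?_) ?_
    · exact prodSpan_antitone (by omega) (mul_mem_prodSpan hu' ht)
    · exact mul_mem_prodSpan hv hs'
    · exact prodSpan_antitone (by omega) (mul_mem_prodSpan hv ht)

lemma iterate_mul_self_mem_wordSpan_sup_prodSpan (hj : 1 ≤ j) {x : A}
    (hx : x ∈ P.wordSpan a b false 1 ⊔ P.prodSpan j) (k : ℕ) :
    (P.mul x)^[k + 1] x ∈ P.wordSpan a b false 1 ⊔ P.prodSpan (j + 1) := by
  induction k with
  | zero => exact mul_mem_wordSpan_sup_prodSpan hj hx hx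
  | succ k ih =>
    have hle : P.wordSpan a b false 1 ⊔ P.prodSpan (j + 1)
        ≤ P.wordSpan a b false 1 ⊔ P.prodSpan j :=
      sup_le_sup_left (prodSpan_antitone j.le_succ) _
    rw [Function.iterate_succ_apply']
    exact mul_mem_wordSpan_sup_prodSpan hj hx (hle ih)

end Approximation

lemma mem_wordSpan_of_W_eq {n : ℕ} (hn : P.IsNilpotentOf n) {a b x : A} (hW : P.W n x = a) :
    x ∈ P.wordSpan a b false 1 := by
  obtain ⟨m, rfl⟩ : ∃ m, n = m + 1 := ⟨n - 1, by have := hn.1; omega⟩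
  have ha : a ∈ P.wordSpan a b false 1 := Submodule.subset_span ⟨1, .base_a, le_rfl⟩
  have happrox : ∀ j, 1 ≤ j → x ∈ P.wordSpan a b false 1 ⊔ P.prodSpan j := by
    intro j hj
    induction j, hj using Nat.le_induction with
    | base => exact Submodule.mem_sup_right (mem_prodSpan_one x)
    | succ j hj ih =>
      rw [show x = a - (P.W (m + 1) x - x) by rw [hW]; abel]
      exact Submodule.sub_mem _ (Submodule.mem_sup_left ha)
        (W_sub_self_mem m x (iterate_mul_self_mem_wordSpan_sup_prodSpan hj ih))
  simpa [hn.prodSpan_eq_bot] using happrox (m + 1) (by omega)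

lemma sub_mem_wordSpan_of_W_eq {n : ℕ} (hn : P.IsNilpotentOf n) {a b x : A}
    (hW : P.W n x = a) : x - a ∈ P.wordSpan a b false 2 := by
  have hx : x ∈ P.wordSpan a b false 1 := mem_wordSpan_of_W_eq hn hW
  obtain ⟨m, rfl⟩ : ∃ m, n = m + 1 := ⟨n - 1, by have := hn.1; omega⟩
  rw [show x - a = -(P.W (m + 1) x - x) by rw [hW]; abel, neg_mem_iff]
  exact W_sub_self_mem m x fun k =>
    wordSpan_antitone (by omega) (iterate_mul_mem_wordSpan hx hx (k + 1))

end PreLieAlg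

theorem statement9_general {F A : Type*} [Field F] [AddCommGroup A] [Module F A]
    (P : PreLieAlg F A) (n : ℕ) (hn : P.IsNilpotentOf n)
    (Ω : A → A) (hΩ₁ : ∀ a, P.W n (Ω a) = a)
    (a b : A) :
    P.flowStar n Ω a b - P.mul a b
      ∈ Submodule.span F {w : A | ∃ m : ℕ, MulWord P a b w m true ∧ 2 ≤ m} := by
  show _ ∈ P.wordSpan a b true 2
  have hx : Ω a ∈ P.wordSpan a b false 1 := PreLieAlg.mem_wordSpan_of_W_eq hn (hΩ₁ a)
  have hxa : Ω a - a ∈ P.wordSpan a b false 2 := PreLieAlg.sub_mem_wordSpan_of_W_eq hn (hΩ₁ a)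
  have hb : b ∈ P.wordSpan a b true 0 := Submodule.subset_span ⟨0, .base_b, le_rfl⟩
  obtain ⟨m, rfl⟩ : ∃ m, n = m + 1 := ⟨n - 1, by have := hn.1; omega⟩
  have hsplit : P.flowStar (m + 1) Ω a b - P.mul a b
      = (P.expL (m + 2) (Ω a) b - b - P.mul (Ω a) b) + P.mul (Ω a - a) b := by
    rw [hn.expL_succ, PreLieAlg.flowStar, PreLieAlg.flow, ← P.lmul_apply, ← P.lmul_apply,
      ← P.lmul_apply, map_sub, LinearMap.sub_apply]
    abel
  rw [hsplit]
  exact Submodule.add_mem _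
    (PreLieAlg.expL_sub_sub_mul_mem m _ b fun k =>
      PreLieAlg.wordSpan_antitone (by omega) (PreLieAlg.iterate_mul_mem_wordSpan hx hb (k + 2)))
    (PreLieAlg.wordSpan_antitone (by omega) (PreLieAlg.mul_mem_wordSpan hxa hb))

theorem statement9 {F A : Type*} [Field F] [CharZero F] [AddCommGroup A] [Module F A]
    (P : PreLieAlg F A) (n : ℕ) (hn : P.IsNilpotentOf n)
    (Ω : A → A) (hΩ₁ : ∀ a, P.W n (Ω a) = a) (hΩ₂ : ∀ a, Ω (P.W n a) = a)
    (a b : A) :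
    P.flowStar n Ω a b - P.mul a b
      ∈ Submodule.span F {w : A | ∃ m : ℕ, MulWord P a b w m true ∧ 2 ≤ m} :=
  statement9_general P n hn Ω hΩ₁ a b
end

section
/- Let (A, +, ·) be a pre-Lie algebra over a field F of characteristic zero in which every product of 4 elements (with any distribution of brackets) is zero, and let Ω: A → A be the inverse of the map W. Then for all a ∈ A: Ω(a) = a − (1/2)·a·a + (1/4)·(a·a)·a + (1/12)·a·(a·a). -/
open Filter Topology

/-!
`Ω a` is found by exhibiting `b` with `W b = a`. Modulo products of four factors, the
combinations `c₁ a + c₂ a·a + c₃ (a·a)·a + c₄ a·(a·a)` multiply like truncated polynomials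
in `a`: only `a·a`, `(a·a)·a` and `a·(a·a)` survive. So `W` of such a combination with
`c₁ = 1` is again one, with coefficients computed explicitly, and `b` is obtained by
solving a triangular linear system for `c₂, c₃, c₄`.
-/

namespace PreLieAlg

variable {F A : Type*} [Field F] [AddCommGroup A] [Module F A] (P : PreLieAlg F A)

theorem IsProd.pos {P : PreLieAlg F A} {x : A} {n : ℕ} (hx : P.IsProd x n) : 0 < n := by
  induction hx with
  | single => exact Nat.one_pos
  | node _ _ ihu ihv => omega

/-- Regroup consecutive factors into single ones. -/
theorem IsProd.of_le_s11 {P : PreLieAlg F A} {x : A} {n k : ℕ} (hx : P.IsProd x n)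
    (hk₁ : 1 ≤ k) (hkn : k ≤ n) : P.IsProd x k := by
  induction hx generalizing k with
  | single a => exact (show k = 1 by omega) ▸ .single a
  | @node u v n m hu hv ihu ihv =>
    rcases Nat.eq_or_lt_of_le hk₁ with rfl | hk
    · exact .single _
    have hn := hu.pos
    have hm := hv.pos
    have := (ihu (k := min n (k - 1)) (by omega) (by omega)).node
      (ihv (k := k - min n (k - 1)) (by omega) (by omega))
    rwa [show min n (k - 1) + (k - min n (k - 1)) = k by omega] at this

theorem mul_eq_zero_of_le {N n m : ℕ} (hN : P.IsNilpotentOf N) {x y : A}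
    (hx : P.IsProd x n) (hy : P.IsProd y m) (h : N ≤ n + m) : P.mul x y = 0 :=
  hN.2 _ ((hx.node hy).of_le_s11 hN.1 h)

def cubic (a : A) (c₁ c₂ c₃ c₄ : F) : A :=
  c₁ • a + c₂ • P.mul a a + c₃ • P.mul (P.mul a a) a + c₄ • P.mul a (P.mul a a)

theorem mul_cubic_cubic (hN : P.IsNilpotentOf 4) (a : A) (p₁ p₂ p₃ p₄ q₁ q₂ q₃ q₄ : F) :
    P.mul (P.cubic a p₁ p₂ p₃ p₄) (P.cubic a q₁ q₂ q₃ q₄)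
      = P.cubic a 0 (p₁ * q₁) (p₂ * q₁) (p₁ * q₂) := by
  have h₁ : P.IsProd a 1 := .single a
  have h₂ : P.IsProd (P.mul a a) 2 := h₁.node h₁
  have h₃ : P.IsProd (P.mul (P.mul a a) a) 3 := h₂.node h₁
  have h₃' : P.IsProd (P.mul a (P.mul a a)) 3 := h₁.node h₂
  simp only [cubic, P.mul_add, P.add_mul, P.smul_mul, P.mul_smul,
    P.mul_eq_zero_of_le hN h₁ h₃ le_rfl, P.mul_eq_zero_of_le hN h₁ h₃' le_rfl,
    P.mul_eq_zero_of_le hN h₂ h₂ le_rfl, P.mul_eq_zero_of_le hN h₃ h₁ le_rfl,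
    P.mul_eq_zero_of_le hN h₃' h₁ le_rfl, P.mul_eq_zero_of_le hN h₂ h₃ (by decide),
    P.mul_eq_zero_of_le hN h₂ h₃' (by decide), P.mul_eq_zero_of_le hN h₃ h₂ (by decide),
    P.mul_eq_zero_of_le hN h₃' h₂ (by decide), P.mul_eq_zero_of_le hN h₃ h₃ (by decide),
    P.mul_eq_zero_of_le hN h₃ h₃' (by decide), P.mul_eq_zero_of_le hN h₃' h₃ (by decide),
    P.mul_eq_zero_of_le hN h₃' h₃' (by decide)]
  module

theorem W_four (x : A) :
    P.W 4 x = x + (1 / 2 : F) • P.mul x x + (1 / 6 : F) • P.mul x (P.mul x x)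
      + (1 / 24 : F) • P.mul x (P.mul x (P.mul x x)) := by
  simp only [W, Finset.sum_range_succ, Finset.sum_range_zero, Function.iterate_succ_apply',
    Function.iterate_zero_apply]
  norm_num [Nat.factorial]

theorem W_four_cubic (hN : P.IsNilpotentOf 4) (a : A) (u v w : F) :
    P.W 4 (P.cubic a 1 u v w) = P.cubic a 1 (u + 1 / 2) (v + u / 2) (w + u / 2 + 1 / 6) := by
  simp only [W_four, P.mul_cubic_cubic hN]
  simp only [cubic]
  module

end PreLieAlg

theorem statement11_general {F A : Type*} [Field F] [CharZero F] [AddCommGroup A] [Module F A]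
    (P : PreLieAlg F A) (h4 : ∀ x : A, P.IsProd x 4 → x = 0)
    (Ω : A → A) (hΩ₂ : ∀ a, Ω (P.W 4 a) = a)
    (a : A) :
    Ω a = a - ((1 : F) / 2) • P.mul a a + ((1 : F) / 4) • P.mul (P.mul a a) a
      + ((1 : F) / 12) • P.mul a (P.mul a a) := by
  have hN : P.IsNilpotentOf 4 := ⟨by norm_num, h4⟩
  have hW : P.W 4 (P.cubic a 1 (-1 / 2) (1 / 4) (1 / 12)) = a := by
    rw [P.W_four_cubic hN]
    norm_num [PreLieAlg.cubic]
  calc Ω a = Ω (P.W 4 (P.cubic a 1 (-1 / 2) (1 / 4) (1 / 12))) := by rw [hW]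
    _ = P.cubic a 1 (-1 / 2) (1 / 4) (1 / 12) := hΩ₂ _
    _ = _ := by
      rw [PreLieAlg.cubic]
      module

theorem statement11 {F A : Type*} [Field F] [CharZero F] [AddCommGroup A] [Module F A]
    (P : PreLieAlg F A) (h4 : ∀ x : A, P.IsProd x 4 → x = 0)
    (Ω : A → A) (hΩ₁ : ∀ a, P.W 4 (Ω a) = a) (hΩ₂ : ∀ a, Ω (P.W 4 a) = a)
    (a : A) :
    Ω a = a - ((1 : F) / 2) • P.mul a a + ((1 : F) / 4) • P.mul (P.mul a a) a
      + ((1 : F) / 12) • P.mul a (P.mul a a) :=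
  statement11_general P h4 Ω hΩ₂ a
end

section
/- Let (A, +, ·) be a nilpotent associative algebra over a field F of characteristic zero (so in particular (A, +, ·) is a nilpotent pre-Lie algebra), let Ω: A → A be the inverse of the map W, and define a∘b = a + e^{L_{Ω(a)}}(b). Then for all a, b ∈ A: a∘b = a + b + a·b. -/
open Filter Topology

/-!
Write `x = Ω a`, so that `a = W(x) = Σ_{k<n} (1/(k+1)!) L_x^k(x)`. By associativity
`L_x^k(x) · b = L_x^{k+1}(b)`, hence `a · b = Σ_{k<n} (1/(k+1)!) L_x^{k+1}(b)`, which is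
`e^{L_x}(b) - b` up to the term with `k = n - 1`; that term vanishes because `L_x^{n-1}(x)`
is a product of `n` elements.
-/

namespace PreLieAlg

variable {F A : Type*} [Field F] [AddCommGroup A] [Module F A] (P : PreLieAlg F A)

theorem zero_mul (c : A) : P.mul 0 c = 0 := by
  have h := P.add_mul 0 0 c
  rw [add_zero] at h
  exact left_eq_add.mp h

theorem sum_mul (s : Finset ℕ) (f : ℕ → A) (c : A) :
    P.mul (∑ k ∈ s, f k) c = ∑ k ∈ s, P.mul (f k) c :=
  map_sum (AddMonoidHom.mk' (fun y => P.mul y c) (fun u v => P.add_mul u v c)) f s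

theorem isProd_iterate_mul_self (x : A) (k : ℕ) : P.IsProd ((P.mul x)^[k] x) (k + 1) := by
  induction k with
  | zero => exact IsProd.single x
  | succ k ih =>
    rw [Function.iterate_succ_apply', Nat.add_comm (k + 1)]
    exact IsProd.node (IsProd.single x) ih

theorem iterate_mul_self_eq_zero {m : ℕ} (hn : P.IsNilpotentOf (m + 1)) (x : A) :
    (P.mul x)^[m] x = 0 :=
  hn.2 _ (P.isProd_iterate_mul_self x m)

theorem iterate_succ_mul_eq_mul_iterate
    (hassoc : ∀ a b c : A, P.mul (P.mul a b) c = P.mul a (P.mul b c)) (x : A) (k : ℕ) (c : A) :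
    (P.mul x)^[k + 1] c = P.mul ((P.mul x)^[k] x) c := by
  induction k generalizing c with
  | zero => rfl
  | succ k ih =>
    rw [Function.iterate_succ_apply', ih, ← hassoc, ← Function.iterate_succ_apply' (P.mul x) k]

theorem expL_eq_add_mul_W
    (hassoc : ∀ a b c : A, P.mul (P.mul a b) c = P.mul a (P.mul b c))
    {n : ℕ} (hn : P.IsNilpotentOf n) (x b : A) :
    P.expL n x b = b + P.mul (P.W n x) b := by
  obtain ⟨m, rfl⟩ := Nat.exists_eq_succ_of_ne_zero hn.1.ne'
  have hW : P.mul (P.W (m + 1) x) b =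
      ∑ k ∈ Finset.range m, ((Nat.factorial (k + 1) : F))⁻¹ • (P.mul x)^[k + 1] b := by
    rw [W, P.sum_mul, Finset.sum_range_succ, P.iterate_mul_self_eq_zero hn, smul_zero, P.zero_mul,
      add_zero]
    refine Finset.sum_congr rfl fun k _ => ?_
    rw [P.smul_mul, P.iterate_succ_mul_eq_mul_iterate hassoc]
  rw [hW, expL, Finset.sum_range_succ', add_comm]
  simp only [Nat.factorial_zero, Nat.cast_one, inv_one, one_smul, Function.iterate_zero_apply]

end PreLieAlg

theorem statement12_general {F A : Type*} [Field F] [AddCommGroup A] [Module F A]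
    (P : PreLieAlg F A) (hassoc : ∀ a b c : A, P.mul (P.mul a b) c = P.mul a (P.mul b c))
    (n : ℕ) (hn : P.IsNilpotentOf n)
    (Ω : A → A) (hΩ₁ : ∀ a, P.W n (Ω a) = a)
    (a b : A) :
    P.flow n Ω a b = a + b + P.mul a b := by
  rw [PreLieAlg.flow, P.expL_eq_add_mul_W hassoc hn, hΩ₁, add_assoc]

theorem statement12 {F A : Type*} [Field F] [CharZero F] [AddCommGroup A] [Module F A]
    (P : PreLieAlg F A) (hassoc : ∀ a b c : A, P.mul (P.mul a b) c = P.mul a (P.mul b c))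
    (n : ℕ) (hn : P.IsNilpotentOf n)
    (Ω : A → A) (hΩ₁ : ∀ a, P.W n (Ω a) = a) (hΩ₂ : ∀ a, Ω (P.W n a) = a)
    (a b : A) :
    P.flow n Ω a b = a + b + P.mul a b :=
  statement12_general P hassoc n hn Ω hΩ₁ a b
end
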